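/- arXiv:2407.06471 — 2 statements merged into one kernel-verified Lean document; each statement's English description precedes it below -/
import Mathlib

section
/- Let F be a field of prime characteristic p, n ≥ 1, and λ a p-regular partition of n. Then φ^{λ,F}(λ) ≠ 0 in F, and for every p-regular partition μ of n with φ^{μ,F}(λ) ≠ 0 one has λ ≼ μ. In other words, λ is the minimum, with respect to the weak refinement order ≼, of the set {μ ∈ Λ_p^+(n) : φ^{μ,F}(λ) ≠ 0}. -/
open scoped Classical TensorProduct

namespace Descent

/-- A list of positive integers summing to `n`: a composition of `n`. -/
def IsComposition (n : ℕ) (l : List ℕ) : Prop :=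
  (∀ x ∈ l, 0 < x) ∧ l.sum = n

/-- `Xi F n q` is the element `Ξ^q` of the group algebra `F[S_n]`: the sum of the
minimal-length representatives of the right cosets of the Young subgroup `S_q` in `S_n`,
i.e. the sum of all permutations that are increasing on each of the consecutive intervals
of lengths `q₀, q₁, …`. -/
noncomputable def Xi (O : Type) [CommRing O] (n : ℕ) (l : List ℕ) :
    MonoidAlgebra O (Equiv.Perm (Fin n)) :=
  ∑ σ ∈ Finset.univ.filter (fun σ : Equiv.Perm (Fin n) =>
      ∀ i j : Fin n, i < j →
        (∃ k, (l.take k).sum ≤ (i : ℕ) ∧ (j : ℕ) < (l.take (k + 1)).sum) →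
        σ i < σ j),
    MonoidAlgebra.single σ 1

/-- The descent algebra `D_n(O)`: the unital subalgebra of `O[S_n]` generated by the elements
`Ξ^q`, for `q` a composition of `n`; by Solomon's theorem it coincides with their `O`-linear
span. -/
noncomputable def descentAlgebra (O : Type) [CommRing O] (n : ℕ) :
    Subalgebra O (MonoidAlgebra O (Equiv.Perm (Fin n))) :=
  Algebra.adjoin O {x | ∃ l, IsComposition n l ∧ x = Xi O n l}

theorem xi_mem {O : Type} [CommRing O] {n : ℕ} {l : List ℕ} (hl : IsComposition n l) :
    Xi O n l ∈ descentAlgebra O n :=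
  Algebra.subset_adjoin ⟨l, hl, rfl⟩

/-- A partition of `n`: a weakly decreasing composition of `n`. -/
def IsPartition (n : ℕ) (l : List ℕ) : Prop :=
  IsComposition n l ∧ l.Pairwise (· ≥ ·)

/-- A partition is `p`-regular if no part occurs `p` or more times. -/
def IsPRegular (p : ℕ) (l : List ℕ) : Prop :=
  ∀ x ∈ l, l.count x < p

/-- The Young character value `φ^q(μ)`: the number of functions `f` from the (indices of the)
parts of `μ` to the (indices of the) parts of `q` such that, for every `j`, the parts of `μ`
mapped to `j` sum to `q_j`. -/
noncomputable def youngChar (q μ : List ℕ) : ℕ :=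
  (Finset.univ.filter (fun f : Fin μ.length → Fin q.length =>
    ∀ j : Fin q.length,
      (∑ i ∈ Finset.univ.filter (fun i => f i = j), μ.get i) = q.get j)).card

/-- `r` is a (strong) refinement of `q` if `r` splits into consecutive blocks whose entries
sum to the successive parts of `q`. -/
def IsRefinement (r q : List ℕ) : Prop :=
  ∃ rs : List (List ℕ), rs.flatten = r ∧ rs.map List.sum = q

/-- `r` is a weak refinement of `q`, written `r ≼ q`: some rearrangement of `r` is a
refinement of `q`. -/
def IsWeakRefinement (r q : List ℕ) : Prop :=
  ∃ r' : List ℕ, r'.Perm r ∧ IsRefinement r' q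

/-! A map counted by `φ^λ(λ)` must be surjective, because every part of `λ` is positive, hence it
is a permutation of the parts preserving `λ`.  So `φ^λ(λ)` is the order of the stabiliser of `λ`,
the product of the factorials of the multiplicities of its parts, and `p` divides none of these
when `λ` is `p`-regular.  Conversely, a map counted by `φ^μ(λ)` groups the parts of `λ` into
blocks summing to the parts of `μ`: concatenating the blocks exhibits `λ ≼ μ`. -/

theorem _root_.List.perm_flatMap_filter {α β : Type*} [DecidableEq α] [DecidableEq β]
    {ks : List β} (hks : ks.Nodup) {l : List α} {f : α → β} (hf : ∀ a ∈ l, f a ∈ ks) :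
    (ks.flatMap fun k => l.filter (f · = k)).Perm l := by
  rw [List.perm_iff_count]
  intro a
  by_cases ha : a ∈ l
  · have hcount : ∀ k, (l.filter (f · = k)).count a = if f a = k then l.count a else 0 := by
      intro k
      split_ifs with hk
      · exact List.count_filter (by simpa using hk)
      · exact List.count_eq_zero.mpr fun h => hk (by simpa using (List.mem_filter.mp h).2)
    rw [List.count_flatMap, ← List.sum_toFinset _ hks]
    simp [hcount, hf a ha]
  · rw [List.count_eq_zero.mpr ha, List.count_eq_zero]
    simp only [List.mem_flatMap, List.mem_filter, not_exists, not_and]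
    exact fun _ _ h => absurd h ha

theorem _root_.List.sum_map_filter_finRange {M : Type*} [AddCommMonoid M] {n : ℕ}
    (p : Fin n → Bool) (g : Fin n → M) :
    (((List.finRange n).filter p).map g).sum = ∑ i ∈ Finset.univ.filter (p · = true), g i := by
  rw [← List.sum_toFinset _ ((List.nodup_finRange n).filter p), List.toFinset_filter,
    List.toFinset_finRange]

theorem _root_.List.card_get_eq_count {α : Type*} [DecidableEq α] (l : List α) (a : α) :
    Fintype.card {i : Fin l.length // l.get i = a} = l.count a := by
  conv_rhs => rw [← List.map_get_finRange l]
  rw [List.count_eq_countP, List.countP_map, Fintype.card_subtype, List.countP_eq_length_filter,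
    ← List.toFinset_card_of_nodup ((List.nodup_finRange _).filter _), List.toFinset_filter,
    List.toFinset_finRange]
  simp only [Function.comp_apply, beq_iff_eq]

theorem _root_.List.image_get_univ {α : Type*} [DecidableEq α] (l : List α) :
    Finset.univ.image l.get = l.toFinset := by
  ext a
  simp [List.mem_iff_get]

def IsYoungMap (q μ : List ℕ) (f : Fin μ.length → Fin q.length) : Prop :=
  ∀ j, ∑ i ∈ Finset.univ.filter (f · = j), μ.get i = q.get j

theorem youngChar_eq_card (q μ : List ℕ) :
    youngChar q μ = (Finset.univ.filter (IsYoungMap q μ)).card := by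
  unfold youngChar IsYoungMap
  congr

theorem isYoungMap_self_iff {l : List ℕ} (hl : ∀ x ∈ l, 0 < x)
    {f : Fin l.length → Fin l.length} :
    IsYoungMap l l f ↔ ∃ σ : Equiv.Perm (Fin l.length), l.get ∘ σ = l.get ∧ ⇑σ = f := by
  constructor
  · intro hf
    have hsurj : Function.Surjective f := by
      intro j
      by_contra! hj
      have := hf j
      rw [Finset.filter_false_of_mem fun i _ => hj i, Finset.sum_empty] at this
      exact (hl _ (l.get_mem j)).ne this
    have hinj : Function.Injective f := Finite.injective_iff_surjective.mpr hsurj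
    refine ⟨Equiv.ofBijective f ⟨hinj, hsurj⟩, funext fun i => ?_, rfl⟩
    have hfiber : Finset.univ.filter (f · = f i) = {i} := by
      ext x
      simp [hinj.eq_iff]
    show l.get (f i) = l.get i
    simpa [hfiber] using (hf (f i)).symm
  · rintro ⟨σ, hσ, rfl⟩ j
    have hfiber : Finset.univ.filter (σ · = j) = {σ.symm j} := by
      ext x
      simp [Equiv.eq_symm_apply]
    simpa [hfiber] using (congrFun hσ (σ.symm j)).symm

theorem youngChar_self_eq_prod_factorial {l : List ℕ} (hl : ∀ x ∈ l, 0 < x) :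
    youngChar l l = ∏ a ∈ l.toFinset, (l.count a).factorial := by
  have hstab : youngChar l l =
      Fintype.card {σ : Equiv.Perm (Fin l.length) // l.get ∘ σ = l.get} := by
    rw [Fintype.card_subtype, ← Finset.card_image_of_injective _ DFunLike.coe_injective,
      youngChar_eq_card]
    congr 1
    ext f
    simp [isYoungMap_self_iff hl]
  rw [hstab, DomMulAct.stabilizer_card', List.image_get_univ]
  simp only [List.card_get_eq_count]

theorem not_dvd_youngChar_self {p : ℕ} (hp : p.Prime) {l : List ℕ} (hl : ∀ x ∈ l, 0 < x)
    (hreg : IsPRegular p l) : ¬ p ∣ youngChar l l := by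
  rw [youngChar_self_eq_prod_factorial hl, hp.prime.dvd_finsetProd_iff]
  rintro ⟨a, ha, hdvd⟩
  rw [hp.dvd_factorial] at hdvd
  exact (hreg a (List.mem_toFinset.mp ha)).not_ge hdvd

theorem IsYoungMap.isWeakRefinement {q μ : List ℕ} {f : Fin μ.length → Fin q.length}
    (hf : IsYoungMap q μ f) : IsWeakRefinement μ q := by
  let block j := ((List.finRange μ.length).filter (f · = j)).map μ.get
  refine ⟨((List.finRange q.length).map block).flatten, ?_, _, rfl, ?_⟩
  · rw [← List.flatMap_def, ← List.map_flatMap]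
    conv_rhs => rw [← List.map_get_finRange μ]
    exact (List.perm_flatMap_filter (List.nodup_finRange _)
      fun i _ => List.mem_finRange (f i)).map _
  · conv_rhs => rw [← List.map_get_finRange q]
    rw [List.map_map]
    refine List.map_congr_left fun j _ => ?_
    simpa [block, List.sum_map_filter_finRange] using hf j

theorem isWeakRefinement_of_youngChar_ne_zero {q μ : List ℕ} (h : youngChar q μ ≠ 0) :
    IsWeakRefinement μ q := by
  obtain ⟨f, hf⟩ := Finset.card_ne_zero.mp h
  exact IsYoungMap.isWeakRefinement (Finset.mem_filter.mp hf).2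

theorem youngChar_self_ne_zero_and_min_general (F : Type) [Field F] (p : ℕ) (hp : p.Prime)
    [CharP F p] (n : ℕ) (lam : List ℕ) (hlam : IsPartition n lam)
    (hreg : IsPRegular p lam) :
    ((youngChar lam lam : F) ≠ 0) ∧
      ∀ μ : List ℕ, IsPartition n μ → IsPRegular p μ → (youngChar μ lam : F) ≠ 0 →
        IsWeakRefinement lam μ := by
  refine ⟨?_, fun μ _ _ hne => isWeakRefinement_of_youngChar_ne_zero fun h => hne ?_⟩
  · exact (CharP.cast_eq_zero_iff F p _).not.mpr (not_dvd_youngChar_self hp hlam.1.1 hreg)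
  · rw [h, Nat.cast_zero]

/-- Let `F` be a field of prime characteristic `p` and `λ` a `p`-regular partition of
`n ≥ 1`.  Then `φ^{λ,F}(λ) ≠ 0` in `F`, and `λ` is the minimum, with respect to the weak
refinement order `≼`, of the set of `p`-regular partitions `μ` of `n` with
`φ^{μ,F}(λ) ≠ 0`. -/
theorem youngChar_self_ne_zero_and_min (F : Type) [Field F] (p : ℕ) (hp : p.Prime)
    [CharP F p] (n : ℕ) (hn : 1 ≤ n) (lam : List ℕ) (hlam : IsPartition n lam)
    (hreg : IsPRegular p lam) :
    ((youngChar lam lam : F) ≠ 0) ∧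
      ∀ μ : List ℕ, IsPartition n μ → IsPRegular p μ → (youngChar μ lam : F) ≠ 0 →
        IsWeakRefinement lam μ :=
  youngChar_self_ne_zero_and_min_general F p hp n lam hlam hreg

end Descent
end

section
/- Let F be a field of prime characteristic p, let n ≥ s ≥ 1, and let μ be a p-regular partition of n−s. Then the pullback along the Bergeron–Garsia–Reutenauer map Δ_s : D_n(F) → D_{n−s}(F) of the simple module M_{μ,F} is isomorphic, as a D_n(F)-module, to the simple module M_{μ^{#s},F}. Equivalently, for every composition q of n, Σ_{i : q_i ≥ s} φ^{q^{(i)},F}(μ) = φ^{q,F}(μ^{#s}) in F. -/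
/-!
The Young character `φ^q(λ)` is the coefficient of `x^q` in the power-sum product
`p_λ = ∏_{m ∈ λ} (x_1^m + ⋯ + x_k^m)`, `k = ℓ(q)`. In characteristic `p` the Frobenius gives
`p_{p^a m'} = p_{m'}^{p^a}`, so `p_λ` only depends on the `p`-equivalence class of `λ`; hence
`p_ν = p_μ · p_s`. The coefficient of `x^q` in `p_μ · (x_1^s + ⋯ + x_k^s)` is the sum over `j`
with `s ≤ q_j` of the coefficients of `x^{q - s e_j}` in `p_μ`, which are the `φ^{q^{(j)}}(μ)`:
when `q_j = s` the variable `x_j` can be dropped because all parts of `μ` are positive.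
-/

open scoped Classical TensorProduct

namespace Descent

/-- `q^{(i)}`: the result of subtracting `s` from the `i`-th part of `q`, this part being
deleted if it equals `s`. -/
def reduceAt (l : List ℕ) (i s : ℕ) : List ℕ :=
  l.take i ++ (if l.getD i 0 = s then [] else [l.getD i 0 - s]) ++ l.drop (i + 1)

/-- The multiset obtained from a partition by replacing every part `m = p^a·m′` with
`p ∤ m′` by `p^a` copies of `m′`. -/
def pExpand (p : ℕ) (l : List ℕ) : Multiset ℕ :=
  (l : Multiset ℕ).bind fun m =>
    Multiset.replicate (p ^ (m.factorization p)) (m / p ^ (m.factorization p))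

/-- `p`-equivalence of partitions, `λ ∼_p μ`. -/
def PEquiv (p : ℕ) (l₁ l₂ : List ℕ) : Prop :=
  pExpand p l₁ = pExpand p l₂

open MvPolynomial
open scoped Finset

noncomputable def youngCount {k : ℕ} (d : Fin k → ℕ) (μ : List ℕ) : ℕ :=
  #{f : Fin μ.length → Fin k | ∀ j, ∑ i with f i = j, μ.get i = d j}

theorem youngChar_eq_youngCount (q μ : List ℕ) :
    youngChar q μ = youngCount (fun j : Fin q.length => q[j]) μ :=
  rfl

theorem youngChar_eq_youngCount_of_length_eq {r : List ℕ} {k : ℕ} (h : r.length = k)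
    {d : Fin k → ℕ} (hd : ∀ j : Fin k, r[j.val]'(h ▸ j.isLt) = d j) (μ : List ℕ) :
    youngChar r μ = youngCount d μ := by
  subst h
  rw [youngChar_eq_youngCount]
  congr
  exact funext hd

theorem youngCount_removeNth {k : ℕ} {μ : List ℕ} (hμ : ∀ x ∈ μ, 0 < x) (j : Fin (k + 1))
    {d : Fin (k + 1) → ℕ} (hd : d j = 0) :
    youngCount (j.removeNth d) μ = youngCount d μ := by
  have hfiber (g : Fin μ.length → Fin k) (j' : Fin k) :
      ∑ i with j.succAbove (g i) = j.succAbove j', μ.get i = ∑ i with g i = j', μ.get i := by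
    simp only [Fin.succAbove_right_inj]
  have hmiss (f : Fin μ.length → Fin (k + 1)) (hf : ∀ j', ∑ i with f i = j', μ.get i = d j')
      (a : Fin μ.length) : f a ≠ j := by
    intro ha
    have hsum := hf j
    rw [hd, Finset.sum_eq_zero_iff] at hsum
    exact (hμ _ (List.get_mem _ _)).ne' (hsum a (by simp [ha]))
  refine Finset.card_nbij (fun g => j.succAbove ∘ g) ?_ ?_ ?_
  · intro g hg
    simp only [Finset.coe_filter, Finset.mem_univ, true_and, Set.mem_ofPred_eq,
      Function.comp_apply] at hg ⊢
    intro j'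
    rcases eq_or_ne j' j with rfl | hj'
    · simp [Fin.succAbove_ne, hd]
    · obtain ⟨j', rfl⟩ := Fin.exists_succAbove_eq hj'
      rw [hfiber, hg]
      rfl
  · exact fun g₁ _ g₂ _ h => funext fun a => Fin.succAbove_right_injective (congrFun h a)
  · intro f hf
    simp only [Finset.coe_filter, Finset.mem_univ, true_and, Set.mem_ofPred_eq] at hf
    choose g hg using fun a => Fin.exists_succAbove_eq (hmiss f hf a)
    refine ⟨g, ?_, funext hg⟩
    simp only [Finset.coe_filter, Finset.mem_univ, true_and, Set.mem_ofPred_eq]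
    intro j'
    rw [← hfiber]
    simp only [hg, hf]
    rfl

theorem reduceAt_of_getD_eq {q : List ℕ} {i s : ℕ} (h : q.getD i 0 = s) :
    reduceAt q i s = q.eraseIdx i := by
  rw [reduceAt, if_pos h, List.append_nil, List.eraseIdx_eq_take_drop_succ]

theorem reduceAt_of_getD_ne {q : List ℕ} {i s : ℕ} (hi : i < q.length) (h : q.getD i 0 ≠ s) :
    reduceAt q i s = q.set i (q[i] - s) := by
  rw [reduceAt, if_neg h, List.set_eq_take_append_cons_drop, if_pos hi,
    List.getD_eq_getElem _ _ hi, List.append_assoc, List.singleton_append]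

theorem youngChar_set {q : List ℕ} (i : Fin q.length) (v : ℕ) (μ : List ℕ) :
    youngChar (q.set i v) μ = youngCount (Function.update (fun j : Fin q.length => q[j]) i v) μ :=
  youngChar_eq_youngCount_of_length_eq (List.length_set ..)
    (fun j => by simp [List.getElem_set, Function.update_apply, Fin.ext_iff, eq_comm]) μ

theorem youngChar_eraseIdx {μ : List ℕ} (hμ : ∀ x ∈ μ, 0 < x) {q : List ℕ}
    (i : Fin q.length) :
    youngChar (q.eraseIdx i) μ =
      youngCount (Function.update (fun j : Fin q.length => q[j]) i 0) μ := by
  cases q with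
  | nil => exact i.elim0
  | cons a t =>
    rw [← youngCount_removeNth hμ i (Function.update_self ..), Fin.removeNth_update]
    refine youngChar_eq_youngCount_of_length_eq
      (by simpa using List.length_eraseIdx_add_one i.isLt) (fun j => ?_) μ
    simp only [List.getElem_eraseIdx, Fin.removeNth, Fin.succAbove, Fin.lt_def, Fin.val_castSucc]
    split_ifs <;> rfl

theorem youngChar_reduceAt {μ : List ℕ} (hμ : ∀ x ∈ μ, 0 < x) {q : List ℕ}
    (i : Fin q.length) (s : ℕ) : youngChar (reduceAt q i s) μ =
      youngCount (Function.update (fun j : Fin q.length => q[j]) i (q[i] - s)) μ := by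
  by_cases h : q.getD i 0 = s
  · rw [List.getD_eq_getElem _ _ i.isLt] at h
    rw [reduceAt_of_getD_eq (by simpa using h), youngChar_eraseIdx hμ, Fin.getElem_fin, h,
      Nat.sub_self]
  · rw [reduceAt_of_getD_ne i.isLt h, youngChar_set, Fin.getElem_fin]

theorem coeff_prod_map_psum {k : ℕ} (R : Type*) [CommSemiring R] (d : Fin k → ℕ)
    (μ : List ℕ) :
    coeff (Finsupp.equivFunOnFinite.symm d) (μ.map (psum (Fin k) R)).prod = youngCount d μ := by
  have hexpand : (μ.map (psum (Fin k) R)).prod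
      = ∑ f : Fin μ.length → Fin k, monomial (∑ i, Finsupp.single (f i) μ[i]) (1 : R) := by
    simp_rw [← Fin.prod_univ_fun_getElem, psum, Finset.prod_univ_sum, Fintype.piFinset_univ,
      monomial_sum_one, X_pow_eq_monomial, Fin.getElem_fin]
  have hcoeff (f : Fin μ.length → Fin k) :
      ∑ i, Finsupp.single (f i) μ[i] = Finsupp.equivFunOnFinite.symm d ↔
        ∀ j, ∑ i with f i = j, μ.get i = d j := by
    simp [Finsupp.ext_iff, Finsupp.finsetSum_apply, Finsupp.single_apply, ← Finset.sum_filter]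
  simp_rw [hexpand, coeff_sum, coeff_monomial, Finset.sum_boole, hcoeff]
  rfl

theorem equivFunOnFinite_symm_sub_single {σ : Type*} [Finite σ] [DecidableEq σ] (d : σ → ℕ)
    (j : σ) (s : ℕ) :
    Finsupp.equivFunOnFinite.symm d - Finsupp.single j s =
      Finsupp.equivFunOnFinite.symm (Function.update d j (d j - s)) := by
  ext j'
  rcases eq_or_ne j' j with rfl | h <;> simp [*]

theorem coeff_mul_psum {σ R : Type*} [Fintype σ] [CommSemiring R] (P : MvPolynomial σ R)
    (d : σ →₀ ℕ) (s : ℕ) :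
    coeff d (P * psum σ R s) =
      ∑ j, if s ≤ d j then coeff (d - Finsupp.single j s) P else 0 := by
  simp_rw [psum, Finset.mul_sum, coeff_sum, X_pow_eq_monomial, coeff_mul_monomial', mul_one,
    Finsupp.single_le_iff]

theorem psum_div_ordProj_pow {σ F : Type*} [Fintype σ] [CommRing F] (p : ℕ) [ExpChar F p]
    (m : ℕ) : psum σ F (m / p ^ m.factorization p) ^ p ^ m.factorization p = psum σ F m := by
  rw [psum, sum_pow_char_pow]
  simp_rw [← pow_mul, Nat.div_mul_cancel (Nat.ordProj_dvd m p), psum]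

theorem prod_map_psum_eq_pExpand {σ F : Type*} [Fintype σ] [CommRing F] (p : ℕ) [ExpChar F p]
    (l : List ℕ) :
    (l.map (psum σ F)).prod = ((pExpand p l).map (psum σ F)).prod := by
  induction l with
  | nil => simp [pExpand]
  | cons m l ih =>
    have hcons : pExpand p (m :: l) =
        .replicate (p ^ m.factorization p) (m / p ^ m.factorization p) + pExpand p l := by
      rw [pExpand, ← Multiset.cons_coe, Multiset.cons_bind, pExpand]
    rw [List.map_cons, List.prod_cons, ih, hcons, Multiset.map_add, Multiset.prod_add,
      Multiset.map_replicate, Multiset.prod_replicate, psum_div_ordProj_pow]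

theorem prod_map_psum_eq_of_pEquiv {σ F : Type*} [Fintype σ] [CommRing F] {p : ℕ} [ExpChar F p]
    {l₁ l₂ : List ℕ} (h : PEquiv p l₁ l₂) :
    (l₁.map (psum σ F)).prod = (l₂.map (psum σ F)).prod := by
  rw [prod_map_psum_eq_pExpand p, h, ← prod_map_psum_eq_pExpand]

theorem sum_youngChar_reduceAt_eq_sharp_general (F : Type) [Field F] (p : ℕ) (hp : p.Prime)
    [CharP F p] (n s : ℕ) (μ : List ℕ)
    (hμ : IsPartition (n - s) μ)
    (ν : List ℕ)
    (hνeq : PEquiv p ν (μ ++ [s])) :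
    ∀ q : List ℕ, IsComposition n q →
      (∑ i ∈ (Finset.range q.length).filter (fun i => s ≤ q.getD i 0),
        ((youngChar (reduceAt q i s) μ : F))) = (youngChar q ν : F) := by
  have : Fact p.Prime := ⟨hp⟩
  intro q _
  have hν : (ν.map (psum (Fin q.length) F)).prod =
      (μ.map (psum (Fin q.length) F)).prod * psum (Fin q.length) F s := by
    simp [prod_map_psum_eq_of_pEquiv hνeq]
  rw [youngChar_eq_youngCount, ← coeff_prod_map_psum F, hν, coeff_mul_psum, Finset.sum_filter,
    Finset.sum_range]
  refine Finset.sum_congr rfl fun j _ => ?_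
  rw [List.getD_eq_getElem _ _ j.isLt, equivFunOnFinite_symm_sub_single, coeff_prod_map_psum,
    youngChar_reduceAt hμ.1.1]
  rfl

/-- Let `F` be a field of prime characteristic `p`, `n ≥ s ≥ 1`, and `μ` a `p`-regular
partition of `n - s`.  The pullback along `Δ_s : D_n(F) → D_{n-s}(F)` of the simple module
`M_{μ,F}` is isomorphic to the simple module `M_{μ^{#s},F}`; equivalently, for every
composition `q` of `n`, `Σ_{i : q_i ≥ s} φ^{q^{(i)},F}(μ) = φ^{q,F}(μ^{#s})` in `F`.
Here `μ^{#s}` is the unique `p`-regular partition `p`-equivalent to `μ` with an extra part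
`s` added (denoted `ν` below). -/
theorem sum_youngChar_reduceAt_eq_sharp (F : Type) [Field F] (p : ℕ) (hp : p.Prime)
    [CharP F p] (n s : ℕ) (hs : 1 ≤ s) (hn : s ≤ n) (μ : List ℕ)
    (hμ : IsPartition (n - s) μ) (hμreg : IsPRegular p μ)
    (ν : List ℕ) (hν : IsPartition n ν) (hνreg : IsPRegular p ν)
    (hνeq : PEquiv p ν (μ ++ [s])) :
    ∀ q : List ℕ, IsComposition n q →
      (∑ i ∈ (Finset.range q.length).filter (fun i => s ≤ q.getD i 0),
        ((youngChar (reduceAt q i s) μ : F))) = (youngChar q ν : F) :=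
  sum_youngChar_reduceAt_eq_sharp_general F p hp n s μ hμ ν hνeq

end Descent
end
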